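/- Let p be a prime, N = p^n, and let X, Y be N-complexes of modules over a commutative ring R of characteristic p. Define (X ⊗ Y)^m = ⊕_{i+j=m} X^i ⊗ Y^j with differential d(x ⊗ y) = d_X(x) ⊗ y + x ⊗ d_Y(y) (the untwisted Leibniz rule). Then d^N = 0, so X ⊗ Y is again an N-complex. -/

import Mathlib

open scoped TensorProduct DirectSum

universe u v

variable {R : Type u} [CommRing R]

def lcast {M : ℤ → Type v} [∀ i, AddCommGroup (M i)] [∀ i, Module R (M i)]
    {a b : ℤ} (h : a = b) : M a →ₗ[R] M b := by subst h; exact LinearMap.id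

def dIter (M : ℤ → Type v) [∀ i, AddCommGroup (M i)] [∀ i, Module R (M i)]
    (d : ∀ i : ℤ, M i →ₗ[R] M (i + 1)) : ∀ (k : ℕ) (i : ℤ), M i →ₗ[R] M (i + k)
  | 0, i => lcast (by simp)
  | k + 1, i =>
    (lcast (show i + 1 + (k : ℕ) = i + ((k : ℕ) + 1 : ℕ) by push_cast; ring)).comp
      ((dIter M d k (i + 1)).comp (d i))

structure NCx (R : Type u) [CommRing R] (N : ℕ) where
  M : ℤ → Type v
  [acg : ∀ i, AddCommGroup (M i)]
  [mod : ∀ i, Module R (M i)]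
  d : ∀ i : ℤ, M i →ₗ[R] M (i + 1)
  dN : ∀ i : ℤ, dIter M d N i = 0

attribute [instance] NCx.acg NCx.mod

/-- The index set `{(i,j) : i + j = n}` of the degree-`n` part of a tensor product of
graded modules. -/
def TIdx (n : ℤ) : Type := {p : ℤ × ℤ // p.1 + p.2 = n}

instance (n : ℤ) : DecidableEq (TIdx n) := by unfold TIdx; infer_instance

/-- The degree-`n` part `⊕_{i+j=n} X^i ⊗ Y^j` of the tensor product of two
graded modules. -/
def TObj {N : ℕ} (X Y : NCx.{u, v} R N) (n : ℤ) : Type v :=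
  ⨁ p : TIdx n, (X.M p.1.1 ⊗[R] Y.M p.1.2)

noncomputable instance {N : ℕ} (X Y : NCx.{u, v} R N) (n : ℤ) :
    AddCommGroup (TObj X Y n) := by unfold TObj; infer_instance

noncomputable instance {N : ℕ} (X Y : NCx.{u, v} R N) (n : ℤ) :
    Module R (TObj X Y n) := by unfold TObj; infer_instance

/-- The (untwisted) differential of the tensor product of two `N`-complexes: on the
summand `X^i ⊗ Y^j` it is `d(x ⊗ y) = d_X x ⊗ y + x ⊗ d_Y y`. -/
noncomputable def TD {N : ℕ} (X Y : NCx.{u, v} R N) (n : ℤ) :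
    TObj X Y n →ₗ[R] TObj X Y (n + 1) :=
  DirectSum.toModule R (TIdx n) (TObj X Y (n + 1)) fun p =>
    ((DirectSum.lof R (TIdx (n + 1)) (fun q => X.M q.1.1 ⊗[R] Y.M q.1.2)
        ⟨(p.1.1 + 1, p.1.2), by obtain ⟨⟨i, j⟩, hp⟩ := p; dsimp at hp ⊢; omega⟩).comp
      (TensorProduct.map (X.d p.1.1) LinearMap.id))
    + ((DirectSum.lof R (TIdx (n + 1)) (fun q => X.M q.1.1 ⊗[R] Y.M q.1.2)
        ⟨(p.1.1, p.1.2 + 1), by obtain ⟨⟨i, j⟩, hp⟩ := p; dsimp at hp ⊢; omega⟩).comp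
      (TensorProduct.map LinearMap.id (Y.d p.1.2)))

lemma lcast_rfl {M : ℤ → Type v} [∀ i, AddCommGroup (M i)] [∀ i, Module R (M i)]
    {a : ℤ} : (lcast (rfl : a = a) : M a →ₗ[R] M a) = LinearMap.id := rfl

section TT
variable {N : ℕ} (X Y : NCx.{u, v} R N)

noncomputable def TT : Type v := ⨁ q : ℤ × ℤ, (X.M q.1 ⊗[R] Y.M q.2)

noncomputable instance : AddCommGroup (TT X Y) := by unfold TT; infer_instance
noncomputable instance : Module R (TT X Y) := by unfold TT; infer_instance

noncomputable def lofT (q : ℤ × ℤ) : (X.M q.1 ⊗[R] Y.M q.2) →ₗ[R] TT X Y :=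
  DirectSum.lof R (ℤ × ℤ) (fun q => X.M q.1 ⊗[R] Y.M q.2) q

noncomputable def DXT : TT X Y →ₗ[R] TT X Y :=
  DirectSum.toModule R (ℤ × ℤ) (TT X Y) fun q =>
    (lofT X Y (q.1 + 1, q.2)).comp (TensorProduct.map (X.d q.1) LinearMap.id)

noncomputable def DYT : TT X Y →ₗ[R] TT X Y :=
  DirectSum.toModule R (ℤ × ℤ) (TT X Y) fun q =>
    (lofT X Y (q.1, q.2 + 1)).comp (TensorProduct.map LinearMap.id (Y.d q.2))

lemma DXT_lof (q : ℤ × ℤ) :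
    (DXT X Y).comp (lofT X Y q)
      = (lofT X Y (q.1 + 1, q.2)).comp (TensorProduct.map (X.d q.1) LinearMap.id) :=
  LinearMap.ext fun x => by
    dsimp only [DXT, lofT, LinearMap.comp_apply]
    exact DirectSum.toModule_lof (ι := ℤ × ℤ) (M := fun q : ℤ × ℤ => X.M q.1 ⊗[R] Y.M q.2) R (N := TT X Y) q x

lemma DYT_lof (q : ℤ × ℤ) :
    (DYT X Y).comp (lofT X Y q)
      = (lofT X Y (q.1, q.2 + 1)).comp (TensorProduct.map LinearMap.id (Y.d q.2)) :=
  LinearMap.ext fun x => by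
    dsimp only [DYT, lofT, LinearMap.comp_apply]
    exact DirectSum.toModule_lof (ι := ℤ × ℤ) (M := fun q : ℤ × ℤ => X.M q.1 ⊗[R] Y.M q.2) R (N := TT X Y) q x

lemma commDXY : Commute (DXT X Y) (DYT X Y) := by
  rw [Commute, SemiconjBy, Module.End.mul_eq_comp, Module.End.mul_eq_comp]
  refine DirectSum.linearMap_ext R fun q => ?_
  show DXT X Y ∘ₗ DYT X Y ∘ₗ lofT X Y q = DYT X Y ∘ₗ DXT X Y ∘ₗ lofT X Y q
  rw [DYT_lof, DXT_lof, ← LinearMap.comp_assoc, ← LinearMap.comp_assoc,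
    DXT_lof, DYT_lof, LinearMap.comp_assoc, LinearMap.comp_assoc,
    ← TensorProduct.map_comp, ← TensorProduct.map_comp]
  simp

lemma lofT_lcast_left {a b : ℤ} (h : a = b) (j : ℤ) :
    (lofT X Y (b, j)).comp
      (TensorProduct.map (lcast (M := X.M) h) (LinearMap.id : Y.M j →ₗ[R] Y.M j))
      = lofT X Y (a, j) := by
  subst h
  rw [lcast_rfl, TensorProduct.map_id, LinearMap.comp_id]

lemma lofT_lcast_right {a b : ℤ} (h : a = b) (i : ℤ) :
    (lofT X Y (i, b)).comp
      (TensorProduct.map (LinearMap.id : X.M i →ₗ[R] X.M i) (lcast (M := Y.M) h))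
      = lofT X Y (i, a) := by
  subst h
  rw [lcast_rfl, TensorProduct.map_id, LinearMap.comp_id]

lemma DXT_pow_lof (k : ℕ) (q : ℤ × ℤ) :
    ((DXT X Y ^ k : Module.End R (TT X Y)) : TT X Y →ₗ[R] TT X Y).comp (lofT X Y q)
      = (lofT X Y (q.1 + (k : ℤ), q.2)).comp
          (TensorProduct.map (dIter X.M X.d k q.1) LinearMap.id) := by
  induction k generalizing q with
  | zero =>
      rw [pow_zero]
      show LinearMap.id.comp (lofT X Y q) = _
      rw [LinearMap.id_comp]
      have : dIter X.M X.d 0 q.1 = lcast (by simp) := rfl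
      rw [this, lofT_lcast_left]
  | succ k ih =>
      rw [pow_succ]
      show ((DXT X Y ^ k : Module.End R (TT X Y)) ∘ₗ DXT X Y) ∘ₗ lofT X Y q = _
      rw [LinearMap.comp_assoc, DXT_lof, ← LinearMap.comp_assoc, ih, LinearMap.comp_assoc,
        ← TensorProduct.map_comp, LinearMap.id_comp]
      have hd : dIter X.M X.d (k + 1) q.1
          = (lcast (M := X.M) (show q.1 + 1 + (k : ℕ) = q.1 + ((k : ℕ) + 1 : ℕ) by
              push_cast; ring)).comp ((dIter X.M X.d k (q.1 + 1)).comp (X.d q.1)) := rfl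
      have hsplit : TensorProduct.map
            ((lcast (M := X.M) (show q.1 + 1 + (k : ℕ) = q.1 + ((k : ℕ) + 1 : ℕ) by
              push_cast; ring)).comp ((dIter X.M X.d k (q.1 + 1)).comp (X.d q.1)))
            (LinearMap.id : Y.M q.2 →ₗ[R] Y.M q.2)
          = (TensorProduct.map (lcast (M := X.M) (show q.1 + 1 + (k : ℕ) = q.1 + ((k : ℕ) + 1 : ℕ) by
              push_cast; ring)) LinearMap.id).comp
            (TensorProduct.map ((dIter X.M X.d k (q.1 + 1)).comp (X.d q.1)) LinearMap.id) := by
        rw [← TensorProduct.map_comp, LinearMap.id_comp]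
      rw [hd, hsplit, ← LinearMap.comp_assoc, lofT_lcast_left]

lemma DYT_pow_lof (k : ℕ) (q : ℤ × ℤ) :
    ((DYT X Y ^ k : Module.End R (TT X Y)) : TT X Y →ₗ[R] TT X Y).comp (lofT X Y q)
      = (lofT X Y (q.1, q.2 + (k : ℤ))).comp
          (TensorProduct.map LinearMap.id (dIter Y.M Y.d k q.2)) := by
  induction k generalizing q with
  | zero =>
      rw [pow_zero]
      show LinearMap.id.comp (lofT X Y q) = _
      rw [LinearMap.id_comp]
      have : dIter Y.M Y.d 0 q.2 = lcast (by simp) := rfl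
      rw [this, lofT_lcast_right]
  | succ k ih =>
      rw [pow_succ]
      show ((DYT X Y ^ k : Module.End R (TT X Y)) ∘ₗ DYT X Y) ∘ₗ lofT X Y q = _
      rw [LinearMap.comp_assoc, DYT_lof, ← LinearMap.comp_assoc, ih, LinearMap.comp_assoc,
        ← TensorProduct.map_comp, LinearMap.id_comp]
      have hd : dIter Y.M Y.d (k + 1) q.2
          = (lcast (M := Y.M) (show q.2 + 1 + (k : ℕ) = q.2 + ((k : ℕ) + 1 : ℕ) by
              push_cast; ring)).comp ((dIter Y.M Y.d k (q.2 + 1)).comp (Y.d q.2)) := rfl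
      have hsplit : TensorProduct.map (LinearMap.id : X.M q.1 →ₗ[R] X.M q.1)
            ((lcast (M := Y.M) (show q.2 + 1 + (k : ℕ) = q.2 + ((k : ℕ) + 1 : ℕ) by
              push_cast; ring)).comp ((dIter Y.M Y.d k (q.2 + 1)).comp (Y.d q.2)))
          = (TensorProduct.map LinearMap.id (lcast (M := Y.M) (show q.2 + 1 + (k : ℕ) = q.2 + ((k : ℕ) + 1 : ℕ) by
              push_cast; ring))).comp
            (TensorProduct.map LinearMap.id ((dIter Y.M Y.d k (q.2 + 1)).comp (Y.d q.2))) := by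
        rw [← TensorProduct.map_comp, LinearMap.id_comp]
      rw [hd, hsplit, ← LinearMap.comp_assoc, lofT_lcast_right]

lemma DXT_pow_N : (DXT X Y : Module.End R (TT X Y)) ^ N = 0 := by
  refine DirectSum.linearMap_ext R fun q => ?_
  show ((DXT X Y ^ N : Module.End R (TT X Y)) : TT X Y →ₗ[R] TT X Y).comp (lofT X Y q)
      = (0 : Module.End R (TT X Y)).comp (lofT X Y q)
  rw [DXT_pow_lof, X.dN]
  ext x y
  simp

lemma DYT_pow_N : (DYT X Y : Module.End R (TT X Y)) ^ N = 0 := by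
  refine DirectSum.linearMap_ext R fun q => ?_
  show ((DYT X Y ^ N : Module.End R (TT X Y)) : TT X Y →ₗ[R] TT X Y).comp (lofT X Y q)
      = (0 : Module.End R (TT X Y)).comp (lofT X Y q)
  rw [DYT_pow_lof, Y.dN]
  ext x y
  simp

noncomputable def iot (n : ℤ) : TObj X Y n →ₗ[R] TT X Y :=
  DirectSum.toModule R (TIdx n) (TT X Y) fun p => lofT X Y p.1

noncomputable def pit (n : ℤ) : TT X Y →ₗ[R] TObj X Y n :=
  DirectSum.toModule R (ℤ × ℤ) (TObj X Y n) fun q =>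
    if h : q.1 + q.2 = n then
      DirectSum.lof R (TIdx n) (fun p => X.M p.1.1 ⊗[R] Y.M p.1.2) ⟨q, h⟩
    else 0

lemma iot_lof (n : ℤ) (p : TIdx n) :
    (iot X Y n).comp (DirectSum.lof R (TIdx n) (fun p => X.M p.1.1 ⊗[R] Y.M p.1.2) p)
      = lofT X Y p.1 :=
  LinearMap.ext fun x => by
    dsimp only [iot, LinearMap.comp_apply]
    exact DirectSum.toModule_lof (ι := TIdx n)
      (M := fun p : TIdx n => X.M p.1.1 ⊗[R] Y.M p.1.2) R (N := TT X Y) p x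

lemma pit_comp_iot (n : ℤ) : (pit X Y n).comp (iot X Y n) = LinearMap.id := by
  refine DirectSum.linearMap_ext R fun p => ?_
  show (pit X Y n).comp ((iot X Y n).comp (DirectSum.lof R (TIdx n) (fun p => X.M p.1.1 ⊗[R] Y.M p.1.2) p)) = LinearMap.id.comp (DirectSum.lof R (TIdx n) (fun p => X.M p.1.1 ⊗[R] Y.M p.1.2) p)
  rw [iot_lof, LinearMap.id_comp]
  refine LinearMap.ext fun x => ?_
  dsimp only [pit, LinearMap.comp_apply, lofT]
  erw [DirectSum.toModule_lof, dif_pos p.2]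
  rfl

lemma iot_TD (n : ℤ) :
    (iot X Y (n + 1)).comp (TD X Y n) = (DXT X Y + DYT X Y).comp (iot X Y n) := by
  refine DirectSum.linearMap_ext R fun p => ?_
  show (iot X Y (n + 1)).comp ((TD X Y n).comp (DirectSum.lof R (TIdx n) (fun p => X.M p.1.1 ⊗[R] Y.M p.1.2) p)) = (DXT X Y + DYT X Y).comp ((iot X Y n).comp (DirectSum.lof R (TIdx n) (fun p => X.M p.1.1 ⊗[R] Y.M p.1.2) p))
  rw [iot_lof]
  have hTD : (TD X Y n).comp (DirectSum.lof R (TIdx n)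
      (fun p => X.M p.1.1 ⊗[R] Y.M p.1.2) p)
      = ((DirectSum.lof R (TIdx (n + 1)) (fun q => X.M q.1.1 ⊗[R] Y.M q.1.2)
          ⟨(p.1.1 + 1, p.1.2), by obtain ⟨⟨i, j⟩, hp⟩ := p; dsimp at hp ⊢; omega⟩).comp
        (TensorProduct.map (X.d p.1.1) LinearMap.id))
      + ((DirectSum.lof R (TIdx (n + 1)) (fun q => X.M q.1.1 ⊗[R] Y.M q.1.2)
          ⟨(p.1.1, p.1.2 + 1), by obtain ⟨⟨i, j⟩, hp⟩ := p; dsimp at hp ⊢; omega⟩).comp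
        (TensorProduct.map LinearMap.id (Y.d p.1.2))) :=
    LinearMap.ext fun x => by
      dsimp only [TD, LinearMap.comp_apply]
      exact DirectSum.toModule_lof (ι := TIdx n)
        (M := fun p : TIdx n => X.M p.1.1 ⊗[R] Y.M p.1.2) R (N := TObj X Y (n + 1)) p x
  rw [hTD]
  erw [LinearMap.comp_add, ← LinearMap.comp_assoc, ← LinearMap.comp_assoc,
    iot_lof, iot_lof, LinearMap.add_comp, DXT_lof, DYT_lof]

lemma iot_lcast {a b : ℤ} (h : a = b) :
    (iot X Y b).comp (lcast (M := TObj X Y) h) = iot X Y a := by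
  subst h
  rw [lcast_rfl, LinearMap.comp_id]

lemma iot_dIter (k : ℕ) (n : ℤ) :
    (iot X Y (n + (k : ℤ))).comp (dIter (TObj X Y) (TD X Y) k n)
      = (((DXT X Y + DYT X Y) ^ k : Module.End R (TT X Y)) :
          TT X Y →ₗ[R] TT X Y).comp (iot X Y n) := by
  induction k generalizing n with
  | zero =>
      rw [pow_zero]
      have : dIter (TObj X Y) (TD X Y) 0 n = lcast (by simp) := rfl
      rw [this, iot_lcast]
      rfl
  | succ k ih =>
      have hd : dIter (TObj X Y) (TD X Y) (k + 1) n
          = (lcast (M := TObj X Y) (show n + 1 + (k : ℕ) = n + ((k : ℕ) + 1 : ℕ) by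
              push_cast; ring)).comp
            ((dIter (TObj X Y) (TD X Y) k (n + 1)).comp (TD X Y n)) := rfl
      rw [hd, ← LinearMap.comp_assoc, iot_lcast, ← LinearMap.comp_assoc, ih,
        LinearMap.comp_assoc, iot_TD, ← LinearMap.comp_assoc, pow_succ]
      rfl

end TT


/-- Let `p` be a prime, `N = p^n`, and `X`, `Y` be `N`-complexes of modules over a
commutative ring `R` of characteristic `p`.  The tensor product with
`(X ⊗ Y)^m = ⊕_{i+j=m} X^i ⊗ Y^j` and the untwisted Leibniz differential
`d(x ⊗ y) = d_X x ⊗ y + x ⊗ d_Y y` satisfies `d^N = 0`, i.e. `X ⊗ Y` is again an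
`N`-complex. -/
theorem tensor_isNComplex_charP (R : Type u) [CommRing R] (p : ℕ) (hp : p.Prime)
    [CharP R p] (n : ℕ) (X Y : NCx.{u, v} R (p ^ n)) (m : ℤ) :
    dIter (TObj X Y) (TD X Y) (p ^ n) m = 0 := by
  have hcomm : Commute (DXT X Y) (DYT X Y) := commDXY X Y
  have hDpow : ((DXT X Y + DYT X Y) ^ (p ^ n) : Module.End R (TT X Y)) = 0 := by
    rw [hcomm.add_pow]
    refine Finset.sum_eq_zero fun k hk => ?_
    rcases eq_or_ne k 0 with rfl | hk0
    · rw [pow_zero, one_mul, Nat.sub_zero, DYT_pow_N, zero_mul]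
    rcases eq_or_ne k (p ^ n) with rfl | hkN
    · rw [DXT_pow_N, zero_mul, zero_mul]
    · have hdvd : p ∣ (p ^ n).choose k := Nat.Prime.dvd_choose_pow hp hk0 hkN
      have hcast : (((p ^ n).choose k : ℕ) : Module.End R (TT X Y)) = 0 := by
        refine LinearMap.ext fun x => ?_
        rw [Module.End.natCast_apply, ← Nat.cast_smul_eq_nsmul R,
          (CharP.cast_eq_zero_iff R p _).2 hdvd, zero_smul]
        rfl
      rw [hcast, mul_zero]
  have h1 : (iot X Y (m + ((p ^ n : ℕ) : ℤ))).comp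
      (dIter (TObj X Y) (TD X Y) (p ^ n) m) = 0 := by
    rw [iot_dIter, hDpow]
    rfl
  refine LinearMap.ext fun x => ?_
  have h2 := LinearMap.congr_fun h1 x
  have h3 := LinearMap.congr_fun (pit_comp_iot X Y (m + ((p ^ n : ℕ) : ℤ)))
    ((dIter (TObj X Y) (TD X Y) (p ^ n) m) x)
  simp only [LinearMap.comp_apply, LinearMap.zero_apply, LinearMap.id_apply] at h2 h3
  rw [h2, map_zero] at h3
  rw [LinearMap.zero_apply, ← h3]
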